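/- arXiv:2110.12174 — 4 statements merged into one kernel-verified Lean document; each statement's English description precedes it below -/
import Mathlib

section
/- Let I be a monomial ideal in a polynomial ring all of whose minimal generators have degree d, let k ≥ 1, and let u = u₁⋯u_k and v = v₁⋯v_k be minimal generators of I^k with each u_i, v_i a minimal generator of I. Suppose A and B are nonempty subsets of {1,…,k} with |A| + |B| = k such that the monomial ∏_{i∈A} u_i · ∏_{j∈B} v_j divides lcm(u,v). If for w = |A| and w = |B| every pair of minimal generators of I^w whose lcm divides the corresponding data is connected by a path in the graph G_{I^w} restricted to divisors of their lcm (i.e., index(I^{|A|}) > 1 and index(I^{|B|}) > 1 in the graph-theoretic sense), then u and v are connected by a path in G_{I^k}^{u,v}. -/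
open Finset

/-- A monomial in `n` variables, given by its exponent vector. -/
abbrev Mon (n : ℕ) := Fin n → ℕ

/-- Degree of a monomial. -/
def mdeg {n : ℕ} (u : Mon n) : ℕ := ∑ i, u i

/-- Divisibility of monomials. -/
def mdvd {n : ℕ} (u v : Mon n) : Prop := ∀ i, u i ≤ v i

/-- Least common multiple of monomials. -/
def mlcm {n : ℕ} (u v : Mon n) : Mon n := fun i => max (u i) (v i)

/-- Products of `k` generators taken from `S`, i.e. the (not necessarily minimal)
monomial generators of `I^k` where `I` is generated by `S`.
(Products of monomials correspond to sums of exponent vectors.) -/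
def powGen {n : ℕ} (S : Finset (Mon n)) (k : ℕ) : Set (Mon n) :=
  { m | ∃ f : Fin k → Mon n, (∀ i, f i ∈ S) ∧ m = ∑ i, f i }

/-- The minimal monomial generating set `𝒢(I^k)`. -/
def minGen {n : ℕ} (S : Finset (Mon n)) (k : ℕ) : Set (Mon n) :=
  { m | m ∈ powGen S k ∧ ∀ m' ∈ powGen S k, mdvd m' m → m' = m }

/-- Adjacency in the graph `G_{I^k}^{u,v}`: both endpoints are minimal generators of `I^k`
dividing `lcm(u,v)`, and the degree of their lcm is `d·k + 1`. -/
def adj {n : ℕ} (S : Finset (Mon n)) (d k : ℕ) (u v a b : Mon n) : Prop :=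
  a ∈ minGen S k ∧ b ∈ minGen S k ∧
    mdvd a (mlcm u v) ∧ mdvd b (mlcm u v) ∧ mdeg (mlcm a b) = d * k + 1

/-- `a` and `b` are connected by a path in `G_{I^k}^{u,v}`. -/
def connectedIn {n : ℕ} (S : Finset (Mon n)) (d k : ℕ) (u v a b : Mon n) : Prop :=
  Relation.ReflTransGen (adj S d k u v) a b

lemma mdeg_add {n : ℕ} (a b : Mon n) : mdeg (a + b) = mdeg a + mdeg b := by
  simp [mdeg, Finset.sum_add_distrib]

lemma mdeg_sum {n : ℕ} {ι : Type*} (s : Finset ι) (f : ι → Mon n) :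
    mdeg (∑ i ∈ s, f i) = ∑ i ∈ s, mdeg (f i) := by
  simp only [mdeg, Finset.sum_apply]
  exact Finset.sum_comm

lemma mem_powGen_sum {n : ℕ} {S : Finset (Mon n)} {k : ℕ} (T : Finset (Fin k))
    (f : Fin k → Mon n) (hf : ∀ i ∈ T, f i ∈ S) : (∑ i ∈ T, f i) ∈ powGen S T.card := by
  refine ⟨fun j => f (T.equivFin.symm j), fun j => hf _ (T.equivFin.symm j).2, ?_⟩
  rw [← Finset.sum_coe_sort T f]
  exact (Fintype.sum_equiv T.equivFin (fun x => f ↑x)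
    (fun j => f ↑(T.equivFin.symm j)) (by intro x; simp)).symm ▸ rfl

lemma powGen_add {n : ℕ} {S : Finset (Mon n)} {a b : ℕ} {x y : Mon n}
    (hx : x ∈ powGen S a) (hy : y ∈ powGen S b) : x + y ∈ powGen S (a + b) := by
  obtain ⟨f, hf, rfl⟩ := hx
  obtain ⟨g, hg, rfl⟩ := hy
  refine ⟨Fin.addCases f g, fun i => i.addCases (fun i => by simpa using hf i)
    (fun j => by simpa using hg j), ?_⟩
  rw [Fin.sum_univ_add]
  simp

lemma mdeg_powGen {n : ℕ} {S : Finset (Mon n)} {d k : ℕ} (hS : ∀ m ∈ S, mdeg m = d)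
    {m : Mon n} (hm : m ∈ powGen S k) : mdeg m = d * k := by
  obtain ⟨f, hf, rfl⟩ := hm
  rw [mdeg_sum]
  simp only [fun i => hS (f i) (hf i)]
  simp [Finset.sum_const, mul_comm]

lemma powGen_minGen {n : ℕ} {S : Finset (Mon n)} {d k : ℕ} (hS : ∀ m ∈ S, mdeg m = d)
    {m : Mon n} (hm : m ∈ powGen S k) : m ∈ minGen S k := by
  refine ⟨hm, fun m' hm' hdv => ?_⟩
  have h : ∑ i, m' i = ∑ i, m i :=
    (mdeg_powGen hS hm').trans (mdeg_powGen hS hm).symm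
  funext j
  exact (Finset.sum_eq_sum_iff_of_le (fun i _ => hdv i)).mp h j (Finset.mem_univ j)

lemma mlcm_add_right {n : ℕ} (x y c : Mon n) : mlcm (x + c) (y + c) = mlcm x y + c := by
  funext i
  simp [mlcm, max_add_add_right]

lemma lift_path {n : ℕ} {S : Finset (Mon n)} {d w m k : ℕ} (hS : ∀ m ∈ S, mdeg m = d)
    (hwm : w + m = k) {c : Mon n} (hc : c ∈ powGen S m) {u v p q : Mon n}
    (hp : mdvd (p + c) (mlcm u v)) (hq : mdvd (q + c) (mlcm u v))
    {x y : Mon n} (h : Relation.ReflTransGen (adj S d w p q) x y) :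
    Relation.ReflTransGen (adj S d k u v) (x + c) (y + c) := by
  induction h with
  | refl => exact Relation.ReflTransGen.refl
  | tail h1 h2 ih =>
    rename_i b cc
    refine ih.tail ?_
    obtain ⟨hbmin, hcmin, hbd, hcd, hdeg⟩ := h2
    have key : ∀ z : Mon n, z ∈ minGen S w → mdvd z (mlcm p q) →
        (z + c ∈ minGen S k ∧ mdvd (z + c) (mlcm u v)) := by
      intro z hz hzd
      constructor
      · have := powGen_add hz.1 hc
        rw [hwm] at this
        exact powGen_minGen hS this
      · intro i
        calc z i + c i ≤ max (p i) (q i) + c i := Nat.add_le_add_right (hzd i) _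
          _ = max (p i + c i) (q i + c i) := (max_add_add_right _ _ _).symm
          _ ≤ mlcm u v i := max_le (hp i) (hq i)
    obtain ⟨hb1, hb2⟩ := key b hbmin hbd
    obtain ⟨hc1, hc2⟩ := key cc hcmin hcd
    refine ⟨hb1, hc1, hb2, hc2, ?_⟩
    rw [mlcm_add_right, mdeg_add, hdeg, mdeg_powGen hS hc, ← hwm]
    ring

theorem stmt0 {n k : ℕ} (d : ℕ) (hk : 1 ≤ k) (S : Finset (Mon n))
    (hS : ∀ m ∈ S, mdeg m = d)
    (u v : Mon n) (uu vv : Fin k → Mon n)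
    (huS : ∀ i, uu i ∈ S) (hvS : ∀ i, vv i ∈ S)
    (hue : u = ∑ i, uu i) (hve : v = ∑ i, vv i)
    (hum : u ∈ minGen S k) (hvm : v ∈ minGen S k)
    (A B : Finset (Fin k)) (hA : A.Nonempty) (hB : B.Nonempty)
    (hAB : A.card + B.card = k)
    (hdvd : mdvd ((∑ i ∈ A, uu i) + (∑ j ∈ B, vv j)) (mlcm u v))
    (hiA : ∀ a ∈ minGen S A.card, ∀ b ∈ minGen S A.card, connectedIn S d A.card a b a b)
    (hiB : ∀ a ∈ minGen S B.card, ∀ b ∈ minGen S B.card, connectedIn S d B.card a b a b) :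
    connectedIn S d k u v u v := by
  classical
  have hAk : A.card ≤ k := by omega
  have hcA : Aᶜ.card = B.card := by
    rw [Finset.card_compl, Fintype.card_fin]; omega
  have hcB : Bᶜ.card = A.card := by
    rw [Finset.card_compl, Fintype.card_fin]; omega
  set uA := ∑ i ∈ A, uu i with huAdef
  set uC := ∑ i ∈ Aᶜ, uu i with huCdef
  set vB := ∑ j ∈ B, vv j with hvBdef
  set vC := ∑ j ∈ Bᶜ, vv j with hvCdef
  have hu_split : u = uA + uC := by
    rw [hue, huAdef, huCdef, Finset.sum_add_sum_compl]
  have hv_split : v = vB + vC := by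
    rw [hve, hvBdef, hvCdef, Finset.sum_add_sum_compl]
  have huA : uA ∈ powGen S A.card := mem_powGen_sum A uu (fun i _ => huS i)
  have huC : uC ∈ powGen S B.card := hcA ▸ mem_powGen_sum Aᶜ uu (fun i _ => huS i)
  have hvB : vB ∈ powGen S B.card := mem_powGen_sum B vv (fun j _ => hvS j)
  have hvC : vC ∈ powGen S A.card := hcB ▸ mem_powGen_sum Bᶜ vv (fun j _ => hvS j)
  have hudvd : mdvd u (mlcm u v) := fun i => le_max_left _ _
  have hvdvd : mdvd v (mlcm u v) := fun i => le_max_right _ _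
  -- Step 1: path from u = uC + uA to vB + uA
  have h1 : Relation.ReflTransGen (adj S d B.card uC vB) uC vB :=
    hiB uC (powGen_minGen hS huC) vB (powGen_minGen hS hvB)
  have step1 : Relation.ReflTransGen (adj S d k u v) (uC + uA) (vB + uA) := by
    refine lift_path hS (by omega) huA ?_ ?_ h1
    · intro i
      have : uC + uA = u := by rw [hu_split, add_comm]
      rw [this]; exact hudvd i
    · intro i
      have : vB + uA = uA + vB := add_comm _ _
      rw [this]; exact hdvd i
  -- Step 2: path from uA + vB to vC + vB = v
  have h2 : Relation.ReflTransGen (adj S d A.card uA vC) uA vC :=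
    hiA uA (powGen_minGen hS huA) vC (powGen_minGen hS hvC)
  have step2 : Relation.ReflTransGen (adj S d k u v) (uA + vB) (vC + vB) := by
    refine lift_path hS (by omega) hvB ?_ ?_ h2
    · exact hdvd
    · intro i
      have : vC + vB = v := by rw [hv_split, add_comm]
      rw [this]; exact hvdvd i
  have step2' : Relation.ReflTransGen (adj S d k u v) (vB + uA) (vC + vB) := by
    rwa [add_comm uA vB] at step2
  have final : Relation.ReflTransGen (adj S d k u v) (uC + uA) (vC + vB) :=
    step1.trans step2'
  show Relation.ReflTransGen (adj S d k u v) u v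
  set R := adj S d k u v with hR
  have e1 : u = uC + uA := by rw [hu_split, add_comm]
  have e3 : vC + vB = v := by rw [hv_split, add_comm]
  rw [e1, ← e3]
  exact final
end

section
/- Let d > 1 and let 𝒞′ be a nonempty finite family of d-element subsets of a set V with |𝒞′| < 2d, such that for every F ∈ 𝒞′ and every (d−1)-element subset G of F, there exists F′ ∈ 𝒞′ with F′ ≠ F and G ⊆ F′. Then there is a (d+1)-element set X with 𝒞′ equal to the family of all d-element subsets of X. -/
/-!
Call `W ∈ C` an exchange of `F` at `y` when `F \ W = {y}`; the hypothesis says every member has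
an exchange at each of its elements, so a member has at least `d` exchanges. If two members
`F, F'` differed in two or more elements, their exchanges would be mostly distinct: an exchange
of `F'` at a point of `F ∩ F'` is never an exchange of `F`, and a common exchange forces
`#(F ∩ F') ≥ d - 2`. Together with `F, F'` themselves this yields `2d` members. Hence any two
members differ in one element, and for two distinct members `F, F'` every member lies in the
`(d + 1)`-set `F ∪ F'`: one that does not contains `F ∩ F'`, and exchanging it at a point of
`F ∩ F'` gives a member that neither lies in `F ∪ F'` nor contains `F ∩ F'`.
-/

open Finset

section

variable {V : Type*} [DecidableEq V]

def ExchangeCovered (C : Finset (Finset V)) : Prop :=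
  ∀ F ∈ C, ∀ y ∈ F, ∃ W ∈ C, F \ W = {y}

def exchanges (C : Finset (Finset V)) (F S : Finset V) : Finset (Finset V) :=
  {W ∈ C | ∃ y ∈ S, F \ W = {y}}

variable {C : Finset (Finset V)} {d : ℕ} {F F' H W : Finset V}

theorem exchangeCovered_of_cover (hcard : ∀ F ∈ C, #F = d)
    (hcover : ∀ F ∈ C, ∀ G ⊆ F, #G = d - 1 → ∃ F' ∈ C, F' ≠ F ∧ G ⊆ F') :
    ExchangeCovered C := by
  intro F hF y hy
  obtain ⟨W, hW, hne, hsub⟩ := hcover F hF (F.erase y) (erase_subset y F)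
    (by rw [card_erase_of_mem hy, hcard F hF])
  have hyW : y ∉ W := fun hyW ↦ hne <| Eq.symm <|
    eq_of_subset_of_card_le (insert_erase hy ▸ insert_subset hyW hsub)
      (by rw [hcard W hW, hcard F hF])
  refine ⟨W, hW, eq_singleton_iff_unique_mem.2 ⟨mem_sdiff.2 ⟨hy, hyW⟩, fun x hx ↦ ?_⟩⟩
  rw [mem_sdiff] at hx
  by_contra hxy
  exact hx.2 (hsub (mem_erase.2 ⟨hxy, hx.1⟩))

theorem card_sdiff_eq_one_of_mem_exchanges {S : Finset V} (hW : W ∈ exchanges C F S) :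
    #(F \ W) = 1 := by
  obtain ⟨-, y, -, hy⟩ := mem_filter.1 hW
  rw [hy, card_singleton]

theorem card_le_card_exchanges (hC : ExchangeCovered C) (hF : F ∈ C) {S : Finset V}
    (hS : S ⊆ F) : #S ≤ #(exchanges C F S) := by
  have hcover : S ⊆ (exchanges C F S).biUnion (F \ ·) := by
    intro y hy
    obtain ⟨W, hW, hFW⟩ := hC F hF y (hS hy)
    exact mem_biUnion.2 ⟨W, mem_filter.2 ⟨hW, y, hy, hFW⟩, hFW ▸ mem_singleton_self y⟩
  calc #S ≤ ∑ W ∈ exchanges C F S, #(F \ W) := (card_le_card hcover).trans card_biUnion_le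
    _ = #(exchanges C F S) := by
      rw [card_eq_sum_ones]
      exact sum_congr rfl fun W hW ↦ card_sdiff_eq_one_of_mem_exchanges hW

theorem card_union_le_of_sdiff_eq_singleton {s t : V} (hs : F \ W = {s}) (ht : F' \ W = {t}) :
    #(F ∪ F') ≤ #W + #({s, t} : Finset V) := by
  calc #(F ∪ F') ≤ #((F ∪ F') \ W) + #W := card_le_card_sdiff_add_card
    _ = #W + #({s, t} : Finset V) := by
      rw [union_sdiff_distrib, hs, ht, ← insert_eq, add_comm]

theorem disjoint_exchanges_exchanges_inter (hcard : ∀ F ∈ C, #F = d) (hF : F ∈ C)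
    (hF' : F' ∈ C) (h : 2 ≤ #(F \ F')) :
    Disjoint (exchanges C F F) (exchanges C F' (F ∩ F')) := by
  refine disjoint_left.2 fun W hW hW' ↦ ?_
  obtain ⟨hWC, s, -, hs⟩ := mem_filter.1 hW
  obtain ⟨-, y, hy, hy'⟩ := mem_filter.1 hW'
  have hys : y = s := by
    have hyW : y ∉ W := (mem_sdiff.1 (hy' ▸ mem_singleton_self y)).2
    simpa [hs] using mem_sdiff.2 ⟨(mem_inter.1 hy).1, hyW⟩
  have hle := card_union_le_of_sdiff_eq_singleton hs (hys ▸ hy')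
  rw [insert_eq_of_mem (mem_singleton_self s), card_singleton, hcard W hWC] at hle
  have hunion := card_union_add_card_inter F F'
  have hinter := card_sdiff_add_card_inter F F'
  rw [hcard F hF, hcard F' hF'] at hunion
  rw [hcard F hF] at hinter
  omega

theorem sub_two_le_card_exchanges_sdiff (hcard : ∀ F ∈ C, #F = d) (hC : ExchangeCovered C)
    (hF : F ∈ C) (hF' : F' ∈ C) (h : 2 ≤ #(F \ F')) :
    d - 2 ≤ #(exchanges C F' F' \ exchanges C F F) := by
  rcases disjoint_or_nonempty_inter (exchanges C F F) (exchanges C F' F') with hdisj | ⟨W, hW⟩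
  · rw [sdiff_eq_self_of_disjoint hdisj.symm, ← hcard F' hF']
    exact (Nat.sub_le _ _).trans (card_le_card_exchanges hC hF' subset_rfl)
  · obtain ⟨hWC, s, -, hs⟩ := mem_filter.1 (mem_inter.1 hW).1
    obtain ⟨-, t, -, ht⟩ := mem_filter.1 (mem_inter.1 hW).2
    have hle := card_union_le_of_sdiff_eq_singleton hs ht
    have hsub : exchanges C F' (F ∩ F') ⊆ exchanges C F' F' \ exchanges C F F := by
      intro X hX
      refine mem_sdiff.2 ⟨?_, disjoint_right.1
        (disjoint_exchanges_exchanges_inter hcard hF hF' h) hX⟩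
      obtain ⟨hXC, y, hy, hXy⟩ := mem_filter.1 hX
      exact mem_filter.2 ⟨hXC, y, (mem_inter.1 hy).2, hXy⟩
    have hinter := (card_le_card_exchanges hC hF' inter_subset_right).trans (card_le_card hsub)
    have hunion := card_union_add_card_inter F F'
    rw [hcard F hF, hcard F' hF'] at hunion
    rw [hcard W hWC] at hle
    have := card_le_two (a := s) (b := t)
    omega

theorem card_sdiff_le_one_of_card_lt_two_mul (hcard : ∀ F ∈ C, #F = d) (hC : ExchangeCovered C)
    (hsize : #C < 2 * d) (hF : F ∈ C) (hF' : F' ∈ C) : #(F \ F') ≤ 1 := by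
  by_contra! h
  have hsymm : #(F' \ F) = #(F \ F') := by
    have h₁ := card_sdiff_add_card_inter F F'
    have h₂ := card_sdiff_add_card_inter F' F
    rw [inter_comm F' F, hcard F' hF'] at h₂
    rw [hcard F hF] at h₁
    omega
  have hN := hcard F hF ▸ card_le_card_exchanges hC hF subset_rfl
  have hN' := sub_two_le_card_exchanges_sdiff hcard hC hF hF' h
  set N := exchanges C F F
  set N' := exchanges C F' F'
  have hnot : ∀ {X Y : Finset V} {S : Finset V}, #(Y \ X) ≠ 1 → X ∉ exchanges C Y S :=
    fun hne hX ↦ hne (card_sdiff_eq_one_of_mem_exchanges hX)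
  have hFF' : F ∉ insert F' (N ∪ N') := by
    simp only [mem_insert, mem_union, not_or]
    exact ⟨fun hEq ↦ by simp [hEq] at h, hnot (by simp), hnot (by omega)⟩
  have hF'N : F' ∉ N ∪ N' := by
    simp only [mem_union, not_or]
    exact ⟨hnot (by omega), hnot (by simp)⟩
  have hsub : insert F (insert F' (N ∪ N')) ⊆ C :=
    insert_subset hF (insert_subset hF' (union_subset (filter_subset _ _) (filter_subset _ _)))
  have hcount := card_le_card hsub
  rw [card_insert_of_notMem hFF', card_insert_of_notMem hF'N, union_comm,
    ← card_sdiff_add_card] at hcount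
  omega

theorem subset_union_or_inter_subset (hF : #(F \ H) ≤ 1) (hF' : #(F' \ H) ≤ 1)
    (hH : #H < #(F ∪ F')) : H ⊆ F ∪ F' ∨ F ∩ F' ⊆ H := by
  refine or_iff_not_imp_right.2 fun hK ↦ ?_
  obtain ⟨k, hkK, hkH⟩ := not_subset.1 hK
  have hsingleton : ∀ {G : Finset V}, k ∈ G → #(G \ H) ≤ 1 → G \ H = {k} := fun hkG hG ↦
    eq_singleton_iff_unique_mem.2
      ⟨mem_sdiff.2 ⟨hkG, hkH⟩, fun x hx ↦ card_le_one.1 hG x hx k (mem_sdiff.2 ⟨hkG, hkH⟩)⟩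
  have hX : #((F ∪ F') \ H) + #H ≤ #(F ∪ F') := by
    rw [union_sdiff_distrib, hsingleton (mem_inter.1 hkK).1 hF,
      hsingleton (mem_inter.1 hkK).2 hF', union_self, card_singleton]
    omega
  rw [card_sdiff_add_card] at hX
  exact union_eq_left.1 (eq_of_superset_of_card_ge subset_union_left hX)

theorem subset_union_of_mem (hC : ExchangeCovered C)
    (hpair : ∀ F ∈ C, ∀ F' ∈ C, #(F \ F') ≤ 1) (hF : F ∈ C) (hF' : F' ∈ C)
    (hK : (F ∩ F').Nonempty) (hlt : ∀ H ∈ C, #H < #(F ∪ F')) (hH : H ∈ C) :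
    H ⊆ F ∪ F' := by
  have key : ∀ H ∈ C, H ⊆ F ∪ F' ∨ F ∩ F' ⊆ H := fun H hH ↦
    subset_union_or_inter_subset (hpair F hF H hH) (hpair F' hF' H hH) (hlt H hH)
  by_contra hHX
  obtain ⟨γ, hγH, hγX⟩ := not_subset.1 hHX
  obtain ⟨k, hk⟩ := hK
  obtain ⟨W, hW, hHW⟩ := hC H hH k ((key H hH).resolve_left hHX hk)
  have hγW : γ ∈ W := by
    by_contra hγW
    have hγk : γ = k := mem_singleton.1 (hHW ▸ mem_sdiff.2 ⟨hγH, hγW⟩)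
    exact hγX (hγk ▸ mem_union_left _ (mem_inter.1 hk).1)
  have hkW : k ∉ W := (mem_sdiff.1 (hHW ▸ mem_singleton_self k)).2
  rcases key W hW with hWX | hKW
  · exact hγX (hWX hγW)
  · exact hkW (hKW hk)

end

theorem stmt2 {V : Type*} [DecidableEq V] (d : ℕ) (hd : 1 < d)
    (C : Finset (Finset V)) (hne : C.Nonempty)
    (hcard : ∀ F ∈ C, F.card = d) (hsize : C.card < 2 * d)
    (hcover : ∀ F ∈ C, ∀ G ⊆ F, G.card = d - 1 → ∃ F' ∈ C, F' ≠ F ∧ G ⊆ F') :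
    ∃ X : Finset V, X.card = d + 1 ∧ C = Finset.powersetCard d X := by
  have hC := exchangeCovered_of_cover hcard hcover
  have hpair : ∀ F ∈ C, ∀ F' ∈ C, #(F \ F') ≤ 1 := fun _ hF _ hF' ↦
    card_sdiff_le_one_of_card_lt_two_mul hcard hC hsize hF hF'
  obtain ⟨F, hF⟩ := hne
  obtain ⟨y, hy⟩ : F.Nonempty := card_pos.1 (by rw [hcard F hF]; omega)
  obtain ⟨F', hF', hFF'⟩ := hC F hF y hy
  have hX : #(F ∪ F') = d + 1 := by
    rw [← card_sdiff_add_card, hFF', card_singleton, hcard F' hF', add_comm]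
  have hK : (F ∩ F').Nonempty := by
    have := card_sdiff_add_card_inter F F'
    rw [hFF', card_singleton, hcard F hF] at this
    exact card_pos.1 (by omega)
  have hlt : ∀ H ∈ C, #H < #(F ∪ F') := fun H hH ↦ by rw [hcard H hH, hX]; omega
  have hsub : C ⊆ powersetCard d (F ∪ F') := fun H hH ↦
    mem_powersetCard.2 ⟨subset_union_of_mem hC hpair hF hF' hK hlt hH, hcard H hH⟩
  have hFN : F ∉ exchanges C F F := fun h ↦ by simpa using card_sdiff_eq_one_of_mem_exchanges h
  refine ⟨F ∪ F', hX, eq_of_subset_of_card_le hsub ?_⟩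
  calc #(powersetCard d (F ∪ F')) = d + 1 := by
        rw [card_powersetCard, hX, Nat.choose_succ_self_right]
    _ ≤ #(insert F (exchanges C F F)) := by
      rw [card_insert_of_notMem hFN]
      exact Nat.succ_le_succ (hcard F hF ▸ card_le_card_exchanges hC hF subset_rfl)
    _ ≤ #C := card_le_card (insert_subset hF (filter_subset _ _))
end

section
/- Let u₁, u₂, v₁, v₂ be subsets of a set V, each of cardinality 3, such that u_i ∩ v_j ≠ ∅ for all i, j ∈ {1,2}. Then |u₁ ∪ u₂ ∪ v₁ ∪ v₂| ≤ 9; and if |u₁ ∪ u₂ ∪ v₁ ∪ v₂| = 9, then there exists an element belonging to all four sets u₁, u₂, v₁, v₂. -/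
lemma sdiff_card_le_aux {V : Type*} [DecidableEq V] {s t : Finset V} {x : V}
    (hx : x ∈ s) (hx' : x ∈ t) : (s \ t).card ≤ s.card - 1 := by
  have hsub : s \ t ⊆ s.erase x := by
    intro y hy
    rw [Finset.mem_sdiff] at hy
    exact Finset.mem_erase.2 ⟨by rintro rfl; exact hy.2 hx', hy.1⟩
  calc (s \ t).card ≤ (s.erase x).card := Finset.card_le_card hsub
    _ = s.card - 1 := Finset.card_erase_of_mem hx

lemma sdiff_card_le_aux2 {V : Type*} [DecidableEq V] {s t : Finset V} {x y : V}
    (hxy : x ≠ y) (hx : x ∈ s) (hx' : x ∈ t) (hy : y ∈ s) (hy' : y ∈ t) :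
    (s \ t).card ≤ s.card - 2 := by
  have hsub : s \ t ⊆ (s.erase x).erase y := by
    intro z hz
    rw [Finset.mem_sdiff] at hz
    refine Finset.mem_erase.2 ⟨by rintro rfl; exact hz.2 hy', Finset.mem_erase.2
      ⟨by rintro rfl; exact hz.2 hx', hz.1⟩⟩
  calc (s \ t).card ≤ ((s.erase x).erase y).card := Finset.card_le_card hsub
    _ = s.card - 2 := by
        rw [Finset.card_erase_of_mem (Finset.mem_erase.2 ⟨fun h => hxy h.symm, hy⟩),
          Finset.card_erase_of_mem hx]
        omega

theorem stmt8 {V : Type*} [DecidableEq V] (u1 u2 v1 v2 : Finset V)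
    (hu1 : u1.card = 3) (hu2 : u2.card = 3) (hv1 : v1.card = 3) (hv2 : v2.card = 3)
    (h11 : (u1 ∩ v1).Nonempty) (h12 : (u1 ∩ v2).Nonempty)
    (h21 : (u2 ∩ v1).Nonempty) (h22 : (u2 ∩ v2).Nonempty) :
    (u1 ∪ u2 ∪ v1 ∪ v2).card ≤ 9 ∧
      ((u1 ∪ u2 ∪ v1 ∪ v2).card = 9 →
        ∃ x, x ∈ u1 ∧ x ∈ u2 ∧ x ∈ v1 ∧ x ∈ v2) := by
  obtain ⟨a, ha⟩ := h11
  obtain ⟨b, hb⟩ := h12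
  obtain ⟨c, hc⟩ := h21
  obtain ⟨d, hd⟩ := h22
  rw [Finset.mem_inter] at ha hb hc hd
  -- decomposition of the union cardinality
  have e3 : (u1 ∪ u2 ∪ v1 ∪ v2).card
      = (v2 \ (u1 ∪ u2 ∪ v1)).card + (u1 ∪ u2 ∪ v1).card := by
    rw [Finset.card_sdiff_add_card, Finset.union_comm]
  have e2 : (u1 ∪ u2 ∪ v1).card = (v1 \ (u1 ∪ u2)).card + (u1 ∪ u2).card := by
    rw [Finset.card_sdiff_add_card, Finset.union_comm]
  have e1 : (u1 ∪ u2).card = (u2 \ u1).card + u1.card := by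
    rw [Finset.card_sdiff_add_card, Finset.union_comm]
  -- membership facts
  have haA : a ∈ u1 ∪ u2 := Finset.mem_union_left _ ha.1
  have hcA : c ∈ u1 ∪ u2 := Finset.mem_union_right _ hc.1
  have hbB : b ∈ u1 ∪ u2 ∪ v1 := Finset.mem_union_left _ (Finset.mem_union_left _ hb.1)
  have hdB : d ∈ u1 ∪ u2 ∪ v1 := Finset.mem_union_left _ (Finset.mem_union_right _ hd.1)
  -- generic bounds
  have t3le2 : (v1 \ (u1 ∪ u2)).card ≤ 2 := by
    have := sdiff_card_le_aux ha.2 haA; omega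
  have t4le2 : (v2 \ (u1 ∪ u2 ∪ v1)).card ≤ 2 := by
    have := sdiff_card_le_aux hb.2 hbB; omega
  have t2le3 : (u2 \ u1).card ≤ 3 := by
    have := Finset.card_le_card (Finset.sdiff_subset (s := u2) (t := u1)); omega
  have bound2 : a = c → (u2 \ u1).card ≤ 2 := by
    intro h
    have := sdiff_card_le_aux (hc.1) (h ▸ ha.1); omega
  have bound3 : a ≠ c → (v1 \ (u1 ∪ u2)).card ≤ 1 := by
    intro h
    have := sdiff_card_le_aux2 h ha.2 haA hc.2 hcA; omega
  have bound4 : b ≠ d → (v2 \ (u1 ∪ u2 ∪ v1)).card ≤ 1 := by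
    intro h
    have := sdiff_card_le_aux2 h hb.2 hbB hd.2 hdB; omega
  have bound2' : b = d → (u2 \ u1).card ≤ 2 := by
    intro h
    have := sdiff_card_le_aux (hd.1) (h ▸ hb.1); omega
  constructor
  · by_cases hac : a = c
    · have := bound2 hac; omega
    · have := bound3 hac; omega
  · intro h9
    by_cases hac : a = c
    · by_cases hbd : b = d
      · -- |u2 \ u1| must be 2, so u2 ∩ u1 is a singleton containing a and b
        have h2 : (u2 \ u1).card = 2 := by
          have := bound2 hac; omega
        have hint : (u2 ∩ u1).card = 1 := by
          have := Finset.card_inter_add_card_sdiff u2 u1; omega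
        have hain : a ∈ u2 ∩ u1 := Finset.mem_inter.2 ⟨hac ▸ hc.1, ha.1⟩
        have hbin : b ∈ u2 ∩ u1 := Finset.mem_inter.2 ⟨hbd ▸ hd.1, hb.1⟩
        have hab : a = b := Finset.card_le_one.1 (le_of_eq hint) _ hain _ hbin
        exact ⟨a, ha.1, hac ▸ hc.1, ha.2, hab ▸ hb.2⟩
      · have := bound2 hac; have := bound4 hbd; omega
    · by_cases hbd : b = d
      · have := bound2' hbd; have := bound3 hac; omega
      · have := bound3 hac; have := bound4 hbd; omega
end

section
/- Let 𝒟 = {123, 246, 145, 356, 134, 136, 146, 346} (the Sturmfels clutter) on vertex set {1,…,6}, and let I = I(𝒟) be its edge ideal in K[x₁,…,x₆]. Then the complement clutter of 𝒟 (all 3-subsets of {1,…,6} not in 𝒟) contains no induced subclutter isomorphic to any of ℬ = {123,124,134,235,345,245}, ℬ₁ = ℬ ∪ {125}, ℬ₂ = ℬ ∪ {125,135}, or ℬ′ = (all 3-subsets of {1,…,6}) ∖ {123, 456}. -/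
open Finset

/-- The clutter `C` contains an induced subclutter isomorphic to the clutter `T`
on vertex set `Fin m`. -/
def containsInducedIso {V : Type*} [DecidableEq V] {m : ℕ}
    (C : Finset (Finset V)) (T : Finset (Finset (Fin m))) : Prop :=
  ∃ f : Fin m → V, Function.Injective f ∧
    C.filter (fun F => F ⊆ Finset.univ.image f) = T.image fun F => F.image f

/- Vertices 1,…,n correspond to indices 0,…,n−1 throughout. -/

/-- The bi-pyramid ℬ = {123, 124, 134, 235, 345, 245} (on 5 vertices). -/
def bipyramid : Finset (Finset (Fin 5)) :=
  { {0,1,2}, {0,1,3}, {0,2,3}, {1,2,4}, {2,3,4}, {1,3,4} }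

/-- ℬ₁ = ℬ ∪ {125}. -/
def bipyramid₁ : Finset (Finset (Fin 5)) := bipyramid ∪ { {0,1,4} }

/-- ℬ₂ = ℬ ∪ {125, 135}. -/
def bipyramid₂ : Finset (Finset (Fin 5)) := bipyramid ∪ { {0,1,4}, {0,2,4} }

/-- ℬ′ = (all 3-subsets of a 6-set) ∖ {123, 456}. -/
def Bprime : Finset (Finset (Fin 6)) :=
  Finset.powersetCard 3 Finset.univ \ { {0,1,2}, {3,4,5} }

/-- The Sturmfels clutter 𝒟 = {123, 246, 145, 356, 134, 136, 146, 346}. -/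
def sturmfels : Finset (Finset (Fin 6)) :=
  { {0,1,2}, {1,3,5}, {0,3,4}, {2,4,5}, {0,2,3}, {0,2,5}, {0,3,5}, {2,3,5} }

/-- The complement clutter of the Sturmfels clutter. -/
def sturmfelsCompl : Finset (Finset (Fin 6)) :=
  Finset.powersetCard 3 Finset.univ \ sturmfels

/-- Explicit literal form of the complement clutter. -/
def litC : Finset (Finset (Fin 6)) :=
  { {3,4,5}, {2,3,4}, {1,4,5}, {1,3,4}, {1,2,5}, {1,2,4}, {1,2,3},
    {0,4,5}, {0,2,4}, {0,1,5}, {0,1,4}, {0,1,3} }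

set_option maxRecDepth 10000 in
lemma hlit : sturmfelsCompl = litC := by decide

/-- Bitmask membership test for a triple being in `litC`. -/
def mem3 (x y z : Fin 6) : Bool :=
  (2 ^ x.val ||| 2 ^ y.val ||| 2 ^ z.val) ∈ [56,28,50,26,38,22,14,49,21,35,19,11]

set_option maxRecDepth 10000 in
lemma mem3_iff : ∀ x y z : Fin 6, ({x,y,z} : Finset (Fin 6)) ∈ litC ↔ mem3 x y z = true := by
  decide

/-- Weak necessary condition for `containsInducedIso`. -/
lemma weak {V : Type*} [DecidableEq V] {m : ℕ}
    {C : Finset (Finset V)} {T : Finset (Finset (Fin m))}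
    (h : containsInducedIso C T) :
    ∃ f : Fin m → V, Function.Injective f ∧ ∀ G ∈ T, G.image f ∈ C := by
  obtain ⟨f, hf, heq⟩ := h
  refine ⟨f, hf, fun G hG => ?_⟩
  have : G.image f ∈ C.filter (fun F => F ⊆ Finset.univ.image f) := by
    rw [heq]; exact Finset.mem_image_of_mem _ hG
  exact (Finset.mem_filter.mp this).1

lemma image_triple {m : ℕ} {α : Type*} [DecidableEq α] (f : Fin m → α) (i j k : Fin m) :
    ({i,j,k} : Finset (Fin m)).image f = {f i, f j, f k} := by
  simp [Finset.image_insert]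

set_option maxRecDepth 10000 in
lemma key5 : ∀ a b c d e : Fin 6, a ≠ b → a ≠ c → a ≠ d → a ≠ e → b ≠ c → b ≠ d →
    b ≠ e → c ≠ d → c ≠ e → d ≠ e →
    ¬ (mem3 a b c && mem3 a b d && mem3 a c d && mem3 b c e && mem3 c d e && mem3 b d e) = true := by
  decide

set_option maxRecDepth 100000 in
set_option maxHeartbeats 3000000 in
lemma key6 : ∀ a b c d e g : Fin 6, a ≠ b → a ≠ c → a ≠ d → a ≠ e → a ≠ g → b ≠ c → b ≠ d →
    b ≠ e → b ≠ g → c ≠ d → c ≠ e → c ≠ g → d ≠ e → d ≠ g → e ≠ g →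
    ¬ (mem3 a b d && mem3 a b e && mem3 a b g && mem3 a c d && mem3 a c e && mem3 a c g &&
       mem3 a d e && mem3 a d g && mem3 a e g && mem3 b c d && mem3 b c e && mem3 b c g &&
       mem3 b d e && mem3 b d g && mem3 b e g && mem3 c d e && mem3 c d g && mem3 c e g) = true := by
  decide

theorem stmt12 :
    ¬ containsInducedIso sturmfelsCompl bipyramid ∧
    ¬ containsInducedIso sturmfelsCompl bipyramid₁ ∧
    ¬ containsInducedIso sturmfelsCompl bipyramid₂ ∧
    ¬ containsInducedIso sturmfelsCompl Bprime := by
  rw [hlit]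
  have mem3_of : ∀ (m : ℕ) (f : Fin m → Fin 6) (i j k : Fin m),
      ({i,j,k} : Finset (Fin m)).image f ∈ litC → mem3 (f i) (f j) (f k) = true := by
    intro m f i j k h
    rw [image_triple] at h
    exact (mem3_iff _ _ _).mp h
  refine ⟨?_, ?_, ?_, ?_⟩
  · intro h
    obtain ⟨f, hinj, hall⟩ := weak h
    have hne : ∀ i j : Fin 5, i ≠ j → f i ≠ f j := fun i j hij h' => hij (hinj h')
    have m1 := mem3_of _ f 0 1 2 (hall _ (by decide))
    have m2 := mem3_of _ f 0 1 3 (hall _ (by decide))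
    have m3 := mem3_of _ f 0 2 3 (hall _ (by decide))
    have m4 := mem3_of _ f 1 2 4 (hall _ (by decide))
    have m5 := mem3_of _ f 2 3 4 (hall _ (by decide))
    have m6 := mem3_of _ f 1 3 4 (hall _ (by decide))
    exact key5 (f 0) (f 1) (f 2) (f 3) (f 4)
      (hne 0 1 (by decide)) (hne 0 2 (by decide)) (hne 0 3 (by decide)) (hne 0 4 (by decide))
      (hne 1 2 (by decide)) (hne 1 3 (by decide)) (hne 1 4 (by decide)) (hne 2 3 (by decide))
      (hne 2 4 (by decide)) (hne 3 4 (by decide))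
      (by rw [m1, m2, m3, m4, m5, m6]; rfl)
  · intro h
    obtain ⟨f, hinj, hall⟩ := weak h
    have hne : ∀ i j : Fin 5, i ≠ j → f i ≠ f j := fun i j hij h' => hij (hinj h')
    have hall' : ∀ G ∈ bipyramid, G.image f ∈ litC := fun G hG =>
      hall G (Finset.mem_union_left _ hG)
    have m1 := mem3_of _ f 0 1 2 (hall' _ (by decide))
    have m2 := mem3_of _ f 0 1 3 (hall' _ (by decide))
    have m3 := mem3_of _ f 0 2 3 (hall' _ (by decide))
    have m4 := mem3_of _ f 1 2 4 (hall' _ (by decide))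
    have m5 := mem3_of _ f 2 3 4 (hall' _ (by decide))
    have m6 := mem3_of _ f 1 3 4 (hall' _ (by decide))
    exact key5 (f 0) (f 1) (f 2) (f 3) (f 4)
      (hne 0 1 (by decide)) (hne 0 2 (by decide)) (hne 0 3 (by decide)) (hne 0 4 (by decide))
      (hne 1 2 (by decide)) (hne 1 3 (by decide)) (hne 1 4 (by decide)) (hne 2 3 (by decide))
      (hne 2 4 (by decide)) (hne 3 4 (by decide))
      (by rw [m1, m2, m3, m4, m5, m6]; rfl)
  · intro h
    obtain ⟨f, hinj, hall⟩ := weak h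
    have hne : ∀ i j : Fin 5, i ≠ j → f i ≠ f j := fun i j hij h' => hij (hinj h')
    have hall' : ∀ G ∈ bipyramid, G.image f ∈ litC := fun G hG =>
      hall G (Finset.mem_union_left _ hG)
    have m1 := mem3_of _ f 0 1 2 (hall' _ (by decide))
    have m2 := mem3_of _ f 0 1 3 (hall' _ (by decide))
    have m3 := mem3_of _ f 0 2 3 (hall' _ (by decide))
    have m4 := mem3_of _ f 1 2 4 (hall' _ (by decide))
    have m5 := mem3_of _ f 2 3 4 (hall' _ (by decide))
    have m6 := mem3_of _ f 1 3 4 (hall' _ (by decide))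
    exact key5 (f 0) (f 1) (f 2) (f 3) (f 4)
      (hne 0 1 (by decide)) (hne 0 2 (by decide)) (hne 0 3 (by decide)) (hne 0 4 (by decide))
      (hne 1 2 (by decide)) (hne 1 3 (by decide)) (hne 1 4 (by decide)) (hne 2 3 (by decide))
      (hne 2 4 (by decide)) (hne 3 4 (by decide))
      (by rw [m1, m2, m3, m4, m5, m6]; rfl)
  · intro h
    obtain ⟨f, hinj, hall⟩ := weak h
    have hne : ∀ i j : Fin 6, i ≠ j → f i ≠ f j := fun i j hij h' => hij (hinj h')
    have m01 := mem3_of _ f 0 1 3 (hall _ (by decide))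
    have m02 := mem3_of _ f 0 1 4 (hall _ (by decide))
    have m03 := mem3_of _ f 0 1 5 (hall _ (by decide))
    have m04 := mem3_of _ f 0 2 3 (hall _ (by decide))
    have m05 := mem3_of _ f 0 2 4 (hall _ (by decide))
    have m06 := mem3_of _ f 0 2 5 (hall _ (by decide))
    have m07 := mem3_of _ f 0 3 4 (hall _ (by decide))
    have m08 := mem3_of _ f 0 3 5 (hall _ (by decide))
    have m09 := mem3_of _ f 0 4 5 (hall _ (by decide))
    have m10 := mem3_of _ f 1 2 3 (hall _ (by decide))
    have m11 := mem3_of _ f 1 2 4 (hall _ (by decide))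
    have m12 := mem3_of _ f 1 2 5 (hall _ (by decide))
    have m13 := mem3_of _ f 1 3 4 (hall _ (by decide))
    have m14 := mem3_of _ f 1 3 5 (hall _ (by decide))
    have m15 := mem3_of _ f 1 4 5 (hall _ (by decide))
    have m16 := mem3_of _ f 2 3 4 (hall _ (by decide))
    have m17 := mem3_of _ f 2 3 5 (hall _ (by decide))
    have m18 := mem3_of _ f 2 4 5 (hall _ (by decide))
    exact key6 (f 0) (f 1) (f 2) (f 3) (f 4) (f 5)
      (hne 0 1 (by decide)) (hne 0 2 (by decide)) (hne 0 3 (by decide)) (hne 0 4 (by decide))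
      (hne 0 5 (by decide)) (hne 1 2 (by decide)) (hne 1 3 (by decide)) (hne 1 4 (by decide))
      (hne 1 5 (by decide)) (hne 2 3 (by decide)) (hne 2 4 (by decide)) (hne 2 5 (by decide))
      (hne 3 4 (by decide)) (hne 3 5 (by decide)) (hne 4 5 (by decide))
      (by rw [m01, m02, m03, m04, m05, m06, m07, m08, m09, m10, m11, m12, m13, m14, m15,
              m16, m17, m18]; rfl)
end
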